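/- As n → ∞, (1/(2n)) ∑_{j=1}^{n} 1/sin((2j−1)π/(4n)) = log(n)/π + (log(16/π) + γ)/π + o(1), where γ is the Euler–Mascheroni constant. -/

import Mathlib

/-!
Write `1 / sin x = (1 / sin x - 1 / x) + 1 / x`. The first part contributes `π⁻¹` times a midpoint
Riemann sum of the continuous function `1 / sin x - 1 / x` on `[0, π / 2]`, which tends to its
integral `log (4 / π)` because `log (tan (x / 2) / x)` is a primitive. The second part is
`(2 / π) ∑_{j < n} 1 / (2 j + 1) = (2 / π) (H_{2n} - H_n / 2)`, which is
`log n / π + (2 log 2 + γ) / π + o(1)`.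
-/

open Real Filter Finset Set Topology MeasureTheory

section MidpointRule

variable {E : Type*} [NormedAddCommGroup E] [NormedSpace ℝ E] [CompleteSpace E] {f : ℝ → E}

lemma norm_integral_sub_smul_le {s t c η : ℝ} (hst : s ≤ t)
    (hf : IntervalIntegrable f volume s t) (hη : ∀ x ∈ Icc s t, ‖f x - f c‖ ≤ η) :
    ‖(∫ x in s..t, f x) - (t - s) • f c‖ ≤ η * (t - s) := by
  rw [← intervalIntegral.integral_const,
    ← intervalIntegral.integral_sub hf intervalIntegrable_const, ← abs_of_nonneg (sub_nonneg.2 hst)]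
  exact intervalIntegral.norm_integral_le_of_norm_le_const fun x hx =>
    hη x (Set.Ioc_subset_Icc_self (Set.uIoc_of_le hst ▸ hx))

lemma norm_midpoint_sum_sub_integral_le {a b η : ℝ} {n : ℕ} (hab : a ≤ b) (hn : n ≠ 0)
    (hf : ContinuousOn f (Icc a b))
    (hη : ∀ x ∈ Icc a b, ∀ y ∈ Icc a b, dist x y ≤ (b - a) / n → dist (f x) (f y) ≤ η) :
    ‖((b - a) / n) • ∑ j ∈ range n, f (a + (j + 1 / 2) * ((b - a) / n)) - ∫ x in a..b, f x‖ ≤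
      η * (b - a) := by
  set h := (b - a) / n
  have hh : 0 ≤ h := by positivity
  have hnh : n * h = b - a := by simp only [h]; field_simp
  set t : ℕ → ℝ := fun j => a + j * h
  have ht_mem : ∀ j ≤ n, t j ∈ Icc a b := by
    intro j hj
    have : (j : ℝ) * h ≤ n * h := by gcongr
    constructor <;> simp only [t] <;> nlinarith
  have hcell : ∀ j ∈ range n,
      ‖(∫ x in t j..t (j + 1), f x) - h • f (a + (j + 1 / 2) * h)‖ ≤ η * h := by
    intro j hj
    have hj : j + 1 ≤ n := mem_range.1 hj
    have hlen : t (j + 1) - t j = h := by simp only [t]; push_cast; ring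
    have hsub : Icc (t j) (t (j + 1)) ⊆ Icc a b :=
      Icc_subset_Icc (ht_mem j (by omega)).1 (ht_mem (j + 1) hj).2
    have hm : a + (j + 1 / 2) * h ∈ Icc (t j) (t (j + 1)) := by
      constructor <;> simp only [t] <;> push_cast <;> nlinarith
    have := norm_integral_sub_smul_le (by linarith)
      ((hf.mono hsub).intervalIntegrable_of_Icc (by linarith)) fun x hx => by
        rw [← dist_eq_norm]
        refine hη x (hsub hx) _ (hsub hm) ?_
        rw [Real.dist_eq, abs_le]
        constructor <;> linarith [hx.1, hx.2, hm.1, hm.2]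
    rwa [hlen] at this
  have hsplit : ∫ x in a..b, f x = ∑ j ∈ range n, ∫ x in t j..t (j + 1), f x := by
    rw [intervalIntegral.sum_integral_adjacent_intervals fun j hj =>
      (hf.mono (Icc_subset_Icc (ht_mem j hj.le).1 (ht_mem (j + 1) hj).2)).intervalIntegrable_of_Icc
        (by simp only [t]; push_cast; linarith)]
    congr 1 <;> simp only [t] <;> push_cast <;> linarith
  calc ‖h • ∑ j ∈ range n, f (a + (j + 1 / 2) * h) - ∫ x in a..b, f x‖
      = ‖∑ j ∈ range n, ((∫ x in t j..t (j + 1), f x) - h • f (a + (j + 1 / 2) * h))‖ := by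
        rw [← norm_neg, neg_sub, hsplit, smul_sum, sum_sub_distrib]
    _ ≤ ∑ _j ∈ range n, η * h := norm_sum_le_of_le _ hcell
    _ = η * (b - a) := by rw [sum_const, card_range, nsmul_eq_mul, ← hnh]; ring

theorem tendsto_midpoint_sum_integral {a b : ℝ} (hab : a ≤ b) (hf : ContinuousOn f (Icc a b)) :
    Tendsto (fun n : ℕ => ((b - a) / n) • ∑ j ∈ range n, f (a + (j + 1 / 2) * ((b - a) / n)))
      atTop (𝓝 (∫ x in a..b, f x)) := by
  rw [Metric.tendsto_atTop]
  intro ε hε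
  have hη : 0 < ε / (b - a + 1) := by positivity
  obtain ⟨δ, hδ, hfδ⟩ := Metric.uniformContinuousOn_iff_le.1
    (isCompact_Icc.uniformContinuousOn_of_continuous hf) _ hη
  obtain ⟨N, hN⟩ := exists_nat_gt ((b - a) / δ)
  refine ⟨N + 1, fun n hn => ?_⟩
  have hn0 : (0 : ℝ) < n := by exact_mod_cast (Nat.succ_pos N).trans_le hn
  have hstep : (b - a) / n ≤ δ := by
    rw [div_le_iff₀ hn0]
    rw [div_lt_iff₀ hδ] at hN
    have : (N : ℝ) + 1 ≤ n := by exact_mod_cast hn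
    nlinarith
  rw [dist_eq_norm]
  calc _ ≤ ε / (b - a + 1) * (b - a) := norm_midpoint_sum_sub_integral_le hab
        (Nat.cast_pos.1 hn0).ne' hf fun x hx y hy hxy => hfδ x hx y hy (hxy.trans hstep)
    _ < ε := by
        rw [div_mul_eq_mul_div, div_lt_iff₀ (by linarith)]
        nlinarith

end MidpointRule

noncomputable def invSinSubInv (x : ℝ) : ℝ := if x = 0 then 0 else 1 / sin x - 1 / x

lemma invSinSubInv_of_ne_zero {x : ℝ} (hx : x ≠ 0) : invSinSubInv x = 1 / sin x - 1 / x :=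
  if_neg hx

lemma abs_one_div_sin_sub_one_div_le_of_pos {x : ℝ} (h0 : 0 < x) (h1 : x ≤ 1) :
    |1 / sin x - 1 / x| ≤ x := by
  have hlt : sin x < x := sin_lt h0
  have hgt : x - x ^ 3 / 6 < sin x := sin_gt_sub_cube h0
  have hs : 0 < sin x := sin_pos_of_pos_of_lt_pi h0 (by linarith [pi_gt_three])
  have hcube : x ^ 3 ≤ x := by nlinarith [pow_le_one₀ h0.le h1 (n := 2)]
  rw [abs_of_nonneg (sub_nonneg.2 (one_div_le_one_div_of_le hs hlt.le)),
    div_sub_div _ _ hs.ne' h0.ne', div_le_iff₀ (by positivity)]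
  nlinarith [mul_le_mul_of_nonneg_left (by linarith : 5 * x / 6 ≤ sin x) (sq_nonneg x)]

lemma abs_one_div_sin_sub_one_div_le {x : ℝ} (h0 : x ≠ 0) (h1 : |x| ≤ 1) :
    |1 / sin x - 1 / x| ≤ |x| := by
  rcases h0.lt_or_gt with hneg | hpos
  · have := abs_one_div_sin_sub_one_div_le_of_pos (neg_pos.2 hneg) (by rwa [abs_of_neg hneg] at h1)
    rwa [sin_neg, one_div_neg_eq_neg_one_div, one_div_neg_eq_neg_one_div, neg_sub_neg,
      abs_sub_comm, ← abs_of_neg hneg] at this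
  · rw [abs_of_pos hpos] at h1 ⊢
    exact abs_one_div_sin_sub_one_div_le_of_pos hpos h1

lemma continuousAt_invSinSubInv_zero : ContinuousAt invSinSubInv 0 := by
  rw [ContinuousAt, show invSinSubInv 0 = 0 from if_pos rfl]
  refine squeeze_zero_norm' ?_ tendsto_norm_zero
  filter_upwards [Metric.closedBall_mem_nhds (0 : ℝ) one_pos] with x hx
  rcases eq_or_ne x 0 with rfl | hx0
  · simp [invSinSubInv]
  · rw [invSinSubInv_of_ne_zero hx0, Real.norm_eq_abs, Real.norm_eq_abs]
    exact abs_one_div_sin_sub_one_div_le hx0 (by simpa using hx)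

lemma continuousOn_invSinSubInv : ContinuousOn invSinSubInv (Ioo (-π) π) := by
  intro x hx
  rcases eq_or_ne x 0 with rfl | hx0
  · exact continuousAt_invSinSubInv_zero.continuousWithinAt
  have hsin : sin x ≠ 0 := mt (sin_eq_zero_iff_of_lt_of_lt hx.1 hx.2).1 hx0
  have hcont : ContinuousAt (fun y => 1 / sin y - 1 / y) x :=
    (continuousAt_const.div continuous_sin.continuousAt hsin).sub
      (continuousAt_const.div continuousAt_id hx0)
  refine (hcont.congr ?_).continuousWithinAt
  filter_upwards [isOpen_ne.mem_nhds hx0] with y hy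
  exact (invSinSubInv_of_ne_zero hy).symm

lemma hasDerivAt_log_tan_half_sub_log {x : ℝ} (h0 : 0 < x) (hπ : x < π) :
    HasDerivAt (fun y => log (tan (y / 2)) - log y) (1 / sin x - 1 / x) x := by
  have hcos : 0 < cos (x / 2) := cos_pos_of_mem_Ioo ⟨by linarith [pi_pos], by linarith⟩
  have hsin : 0 < sin (x / 2) := sin_pos_of_pos_of_lt_pi (by linarith) (by linarith)
  have htan : HasDerivAt (fun y => tan (y / 2)) (1 / cos (x / 2) ^ 2 * (1 / 2)) x :=
    HasDerivAt.comp x (hasDerivAt_tan hcos.ne') ((hasDerivAt_id' x).div_const 2)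
  have hdouble : sin x = 2 * sin (x / 2) * cos (x / 2) := by rw [← sin_two_mul]; ring_nf
  refine ((htan.log (tan_pos_of_pos_of_lt_pi_div_two (by linarith) (by linarith)).ne').sub
    (hasDerivAt_log h0.ne')).congr_deriv ?_
  rw [tan_eq_sin_div_cos, hdouble]
  field_simp

lemma log_sinc_half_div_two_mul_cos_half {x : ℝ} (h0 : 0 < x) (hπ : x < π) :
    log (sinc (x / 2) / (2 * cos (x / 2))) = log (tan (x / 2)) - log x := by
  have hcos : 0 < cos (x / 2) := cos_pos_of_mem_Ioo ⟨by linarith [pi_pos], by linarith⟩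
  have hsin : 0 < sin (x / 2) := sin_pos_of_pos_of_lt_pi (by linarith) (by linarith)
  rw [sinc_of_ne_zero (by positivity), tan_eq_sin_div_cos, ← log_div (by positivity) h0.ne']
  congr 1
  field_simp

lemma integral_invSinSubInv : ∫ x in (0 : ℝ)..π / 2, invSinSubInv x = log (4 / π) := by
  have hcos : ∀ x ∈ Icc 0 (π / 2), 0 < cos (x / 2) := fun x hx =>
    cos_pos_of_mem_Ioo ⟨by linarith [pi_pos, hx.1], by linarith [pi_pos, hx.2]⟩
  have hsinc : ∀ x ∈ Icc 0 (π / 2), 0 < sinc (x / 2) := by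
    intro x hx
    rcases hx.1.eq_or_lt with rfl | hx0
    · simp
    · rw [sinc_of_ne_zero (by positivity)]
      exact div_pos (sin_pos_of_pos_of_lt_pi (by positivity) (by linarith [hx.2, pi_pos]))
        (by positivity)
  -- the primitive `log (tan (x / 2) / x)`, written through `sinc` so that it is continuous at `0`
  rw [intervalIntegral.integral_eq_sub_of_hasDerivAt_of_le (f := fun x =>
    log (sinc (x / 2) / (2 * cos (x / 2)))) pi_div_two_pos.le ?_ ?_ ?_]
  · rw [log_sinc_half_div_two_mul_cos_half pi_div_two_pos (by linarith [pi_pos]),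
      show π / 2 / 2 = π / 4 by ring, tan_pi_div_four, log_one, zero_div, sinc_zero, cos_zero,
      zero_sub, sub_eq_add_neg, ← log_inv, ← log_inv, ← log_mul (by positivity) (by norm_num)]
    congr 1
    field_simp
    norm_num
  · have hcont : ContinuousOn (fun x => sinc (x / 2) / (2 * cos (x / 2))) (Icc 0 (π / 2)) :=
      ((continuous_sinc.comp (continuous_id.div_const 2)).continuousOn).div (by fun_prop)
        fun x hx => by linarith [hcos x hx]
    exact hcont.log fun x hx => (div_pos (hsinc x hx) (by linarith [hcos x hx])).ne'
  · intro x hx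
    rw [invSinSubInv_of_ne_zero hx.1.ne']
    refine (hasDerivAt_log_tan_half_sub_log hx.1
      (by linarith [hx.2, pi_pos])).congr_of_eventuallyEq ?_
    filter_upwards [Ioo_mem_nhds hx.1 (by linarith [hx.2, pi_pos] : x < π)] with y hy
    exact log_sinc_half_div_two_mul_cos_half hy.1 hy.2
  · exact (continuousOn_invSinSubInv.mono (Icc_subset_Ioo (by linarith [pi_pos])
      (by linarith [pi_pos]))).intervalIntegrable_of_Icc pi_div_two_pos.le

lemma sum_range_one_div_two_mul_add_one (n : ℕ) :
    ∑ j ∈ range n, (1 : ℝ) / (2 * j + 1) = harmonic (2 * n) - harmonic n / 2 := by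
  induction n with
  | zero => simp
  | succ n ih =>
    rw [sum_range_succ, ih, show 2 * (n + 1) = 2 * n + 1 + 1 by ring, harmonic_succ,
      harmonic_succ, harmonic_succ]
    push_cast
    field_simp
    ring

lemma tendsto_sum_range_one_div_two_mul_add_one_sub_half_log :
    Tendsto (fun n : ℕ => ∑ j ∈ range n, (1 : ℝ) / (2 * j + 1) - log n / 2) atTop
      (𝓝 (log 2 + eulerMascheroniConstant / 2)) := by
  have hdouble := tendsto_harmonic_sub_log.comp (tendsto_id.const_mul_atTop' two_pos)
  have := (hdouble.sub (tendsto_harmonic_sub_log.div_const 2)).add_const (log 2)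
  rw [show eulerMascheroniConstant - eulerMascheroniConstant / 2 + log 2 =
    log 2 + eulerMascheroniConstant / 2 by ring] at this
  refine this.congr' ?_
  filter_upwards [eventually_ne_atTop 0] with n hn
  simp only [Function.comp_apply, id, sum_range_one_div_two_mul_add_one]
  push_cast
  rw [log_mul two_ne_zero (by exact_mod_cast hn)]
  ring

lemma one_div_two_mul_sum_one_div_sin_odd {n : ℕ} (hn : n ≠ 0) :
    1 / (2 * (n : ℝ)) * ∑ j ∈ Icc 1 n, 1 / sin ((2 * (j : ℝ) - 1) * π / (4 * n)) =
      π⁻¹ * (π / 2 / n * ∑ j ∈ range n, invSinSubInv ((j + 1 / 2) * (π / 2 / n))) +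
        2 / π * ∑ j ∈ range n, (1 : ℝ) / (2 * j + 1) := by
  rw [← Finset.Ico_add_one_right_eq_Icc, sum_Ico_eq_sum_range, Nat.add_sub_cancel, mul_sum, mul_sum,
    mul_sum, mul_sum, ← sum_add_distrib]
  refine sum_congr rfl fun j _ => ?_
  have hn' : (0 : ℝ) < n := by positivity
  have harg : (2 * ((1 + j : ℕ) : ℝ) - 1) * π / (4 * n) = (j + 1 / 2) * (π / 2 / n) := by
    push_cast; field_simp; ring
  rw [harg, invSinSubInv_of_ne_zero (by positivity)]
  field_simp
  ring

theorem odd_csc_sum_asymptotic :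
    Tendsto (fun n : ℕ =>
        (1 / (2 * (n : ℝ))) * ∑ j ∈ Finset.Icc 1 n, 1 / Real.sin ((2 * (j : ℝ) - 1) * π / (4 * n)) -
          (Real.log n / π + (Real.log (16 / π) + Real.eulerMascheroniConstant) / π))
      atTop (nhds 0) := by
  have hRiemann := tendsto_midpoint_sum_integral pi_div_two_pos.le
    (continuousOn_invSinSubInv.mono (Icc_subset_Ioo (by linarith [pi_pos]) (by linarith [pi_pos])))
  simp only [sub_zero, zero_add, smul_eq_mul, integral_invSinSubInv] at hRiemann
  have hlim := ((hRiemann.const_mul π⁻¹).add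
    (tendsto_sum_range_one_div_two_mul_add_one_sub_half_log.const_mul (2 / π))).sub_const
      ((log (16 / π) + eulerMascheroniConstant) / π)
  have hlog16 : log (16 / π) = log (4 / π) + 2 * log 2 := by
    rw [show (16 : ℝ) / π = 4 / π * 2 ^ 2 by ring, log_mul (by positivity) (by norm_num), log_pow]
    push_cast
    ring
  rw [hlog16, show π⁻¹ * log (4 / π) + 2 / π * (log 2 + eulerMascheroniConstant / 2) -
    (log (4 / π) + 2 * log 2 + eulerMascheroniConstant) / π = 0 by ring] at hlim
  refine hlim.congr' ?_
  filter_upwards [eventually_ne_atTop 0] with n hn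
  rw [one_div_two_mul_sum_one_div_sin_odd hn, hlog16]
  ring
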